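/- arXiv:1406.7546 — 3 statements merged into one kernel-verified Lean document; each statement's English description precedes it below -/
import Mathlib

section
/- Let E be a Banach space, (xₙ) a sequence in E, and p ∈ [1,∞). If F ⊆ E* is a norming subset (i.e., ‖x‖ = sup_{x*∈F} |⟨x, x*⟩| for all x ∈ E), then the weak-ℓᵖ norm of (xₙ) computed over the unit ball of E* equals the supremum over F: sup_{x*∈B_{E*}} (∑ₙ |⟨xₙ, x*⟩|^p)^{1/p} = sup_{x*∈F} (∑ₙ |⟨xₙ, x*⟩|^p)^{1/p}. -/
/-!
Functionals in a norming set have norm at most one, which gives `≥`. For `≤`, fix `g` in the unit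
ball and a finite set `s` of indices, and put `T = ∑_{n ∈ s} |g xₙ|^p` and
`y = ∑_{n ∈ s} sign (g xₙ) |g xₙ|^(p-1) xₙ`, so that `g y = T`. By Hölder, every `f ∈ F` satisfies
`|f y| ≤ S T^(1-1/p)`, where `S` is the supremum over `F`. Since `F` is norming,
`T = g y ≤ ‖y‖ ≤ S T^(1-1/p)`, that is `T^(1/p) ≤ S`.
-/

open scoped ENNReal

theorem Real.abs_rpow_sub_one_mul_abs {p : ℝ} (hp : p ≠ 0) (t : ℝ) :
    |t| ^ (p - 1) * |t| = |t| ^ p := by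
  rw [← Real.rpow_add_one' (abs_nonneg t) (by simpa using hp), sub_add_cancel]

theorem Real.le_rpow_of_le_mul_rpow_one_sub_inv {p C T : ℝ} (hp : 0 < p) (hC : 0 ≤ C)
    (hT : 0 ≤ T) (h : T ≤ C * T ^ (1 - p⁻¹)) : T ≤ C ^ p := by
  rcases hT.eq_or_lt with rfl | hT
  · positivity
  rw [← Real.rpow_inv_le_iff_of_pos hT.le hC hp]
  have hsplit : T = T ^ p⁻¹ * T ^ (1 - p⁻¹) := by
    rw [← Real.rpow_add hT, add_sub_cancel, Real.rpow_one]
  nth_rewrite 1 [hsplit] at h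
  exact le_of_mul_le_mul_right h (Real.rpow_pos_of_pos hT _)

theorem Finset.sum_abs_rpow_sub_one_mul_abs_le {ι : Type*} (s : Finset ι) {p : ℝ} (hp : 1 ≤ p)
    (u v : ι → ℝ) :
    ∑ i ∈ s, |u i| ^ (p - 1) * |v i| ≤
      (∑ i ∈ s, |u i| ^ p) ^ (1 - p⁻¹) * (∑ i ∈ s, |v i| ^ p) ^ p⁻¹ := by
  rcases hp.eq_or_lt with rfl | hp
  · simp
  have hpq := Real.HolderConjugate.conjExponent hp
  have hq : ∀ i, (|u i| ^ (p - 1)) ^ p.conjExponent = |u i| ^ p := fun i => by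
    rw [← Real.rpow_mul (abs_nonneg _), hpq.sub_one_mul_conj]
  calc ∑ i ∈ s, |u i| ^ (p - 1) * |v i|
      ≤ (∑ i ∈ s, (|u i| ^ (p - 1)) ^ p.conjExponent) ^ p.conjExponent⁻¹ *
          (∑ i ∈ s, |v i| ^ p) ^ p⁻¹ := by
        simpa only [mul_comm, one_div] using Real.inner_le_Lp_mul_Lq_of_nonneg s hpq.symm
          (fun i _ => Real.rpow_nonneg (abs_nonneg (u i)) _) (fun i _ => abs_nonneg (v i))
    _ = _ := by simp only [hq, ← hpq.one_sub_inv]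

theorem ENNReal.sum_coe_nnnorm_rpow_le_ofReal_rpow_iff {ι : Type*} (s : Finset ι) {p : ℝ}
    (hp : 0 ≤ p) (u : ι → ℝ) {C : ℝ} (hC : 0 ≤ C) :
    ∑ i ∈ s, (‖u i‖₊ : ℝ≥0∞) ^ p ≤ ENNReal.ofReal C ^ p ↔ ∑ i ∈ s, |u i| ^ p ≤ C ^ p := by
  have hsum : ∑ i ∈ s, (‖u i‖₊ : ℝ≥0∞) ^ p = ENNReal.ofReal (∑ i ∈ s, |u i| ^ p) := by
    rw [ENNReal.ofReal_sum_of_nonneg fun i _ => by positivity]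
    refine Finset.sum_congr rfl fun i _ => ?_
    rw [← ENNReal.ofReal_rpow_of_nonneg (abs_nonneg _) hp, ← Real.enorm_eq_ofReal_abs,
      enorm_eq_nnnorm]
  rw [hsum, ENNReal.ofReal_rpow_of_nonneg hC hp, ENNReal.ofReal_le_ofReal_iff (by positivity)]

section Extremal

variable {E ι : Type*} [NormedAddCommGroup E] [NormedSpace ℝ E]

noncomputable def holderExtremal (p : ℝ) (g : StrongDual ℝ E) (s : Finset ι) (x : ι → E) : E :=
  ∑ i ∈ s, ((SignType.sign (g (x i)) : ℝ) * |g (x i)| ^ (p - 1)) • x i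

variable {p : ℝ} (s : Finset ι) (x : ι → E)

theorem apply_holderExtremal_self (hp : p ≠ 0) (g : StrongDual ℝ E) :
    g (holderExtremal p g s x) = ∑ i ∈ s, |g (x i)| ^ p := by
  simp only [holderExtremal, map_sum, map_smul, smul_eq_mul]
  refine Finset.sum_congr rfl fun i _ => ?_
  rw [mul_comm _ (|g (x i)| ^ (p - 1)), mul_assoc, sign_mul_self,
    Real.abs_rpow_sub_one_mul_abs hp]

theorem abs_apply_holderExtremal_le (g f : StrongDual ℝ E) :
    |f (holderExtremal p g s x)| ≤ ∑ i ∈ s, |g (x i)| ^ (p - 1) * |f (x i)| := by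
  simp only [holderExtremal, map_sum, map_smul, smul_eq_mul]
  refine (Finset.abs_sum_le_sum_abs _ _).trans (Finset.sum_le_sum fun i _ => ?_)
  rw [abs_mul, abs_mul, abs_of_nonneg (Real.rpow_nonneg (abs_nonneg _) _)]
  gcongr
  refine mul_le_of_le_one_left (Real.rpow_nonneg (abs_nonneg _) _) ?_
  rcases lt_trichotomy (g (x i)) 0 with h | h | h <;> simp [h]

end Extremal

section Norming

variable {E ι : Type*} [NormedAddCommGroup E] [NormedSpace ℝ E]

def IsNorming (F : Set (StrongDual ℝ E)) : Prop :=
  ∀ y : E, (‖y‖₊ : ℝ≥0∞) = ⨆ f ∈ F, (‖f y‖₊ : ℝ≥0∞)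

variable {F : Set (StrongDual ℝ E)}

theorem IsNorming.norm_le_of_forall_abs_le (hF : IsNorming F) {y : E} {B : ℝ} (hB : 0 ≤ B)
    (h : ∀ f ∈ F, |f y| ≤ B) : ‖y‖ ≤ B := by
  have : ‖y‖ₑ ≤ ENNReal.ofReal B := by
    rw [enorm_eq_nnnorm, hF y]
    exact iSup₂_le fun f hf => by
      rw [← enorm_eq_nnnorm, Real.enorm_eq_ofReal_abs]
      exact ENNReal.ofReal_le_ofReal (h f hf)
  rwa [← ofReal_norm, ENNReal.ofReal_le_ofReal_iff hB] at this

theorem IsNorming.norm_le_one (hF : IsNorming F) {f : StrongDual ℝ E} (hf : f ∈ F) :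
    ‖f‖ ≤ 1 :=
  f.opNorm_le_bound zero_le_one fun y => by
    have : (‖f y‖₊ : ℝ≥0∞) ≤ ‖y‖₊ := (hF y).symm ▸ le_iSup₂_of_le f hf le_rfl
    rw [one_mul]
    exact_mod_cast this

theorem IsNorming.sum_abs_rpow_le (hF : IsNorming F) {p : ℝ} (hp : 1 ≤ p) {g : StrongDual ℝ E}
    (hg : ‖g‖ ≤ 1) (s : Finset ι) (x : ι → E) {C : ℝ} (hC : 0 ≤ C)
    (h : ∀ f ∈ F, ∑ i ∈ s, |f (x i)| ^ p ≤ C ^ p) :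
    ∑ i ∈ s, |g (x i)| ^ p ≤ C ^ p := by
  have hp0 : 0 < p := by linarith
  set T := ∑ i ∈ s, |g (x i)| ^ p
  set y := holderExtremal p g s x
  have hfy : ∀ f ∈ F, |f y| ≤ C * T ^ (1 - p⁻¹) := fun f hf => calc
    |f y| ≤ ∑ i ∈ s, |g (x i)| ^ (p - 1) * |f (x i)| := abs_apply_holderExtremal_le s x g f
    _ ≤ T ^ (1 - p⁻¹) * (∑ i ∈ s, |f (x i)| ^ p) ^ p⁻¹ :=
      Finset.sum_abs_rpow_sub_one_mul_abs_le s hp _ _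
    _ ≤ T ^ (1 - p⁻¹) * C := by
      gcongr
      exact (Real.rpow_inv_le_iff_of_pos (by positivity) hC hp0).2 (h f hf)
    _ = C * T ^ (1 - p⁻¹) := mul_comm _ _
  refine Real.le_rpow_of_le_mul_rpow_one_sub_inv hp0 hC (by positivity) ?_
  calc T = g y := (apply_holderExtremal_self s x hp0.ne' g).symm
    _ ≤ ‖g‖ * ‖y‖ := (le_abs_self _).trans (g.le_opNorm y)
    _ ≤ ‖y‖ := mul_le_of_le_one_left (norm_nonneg y) hg
    _ ≤ C * T ^ (1 - p⁻¹) := hF.norm_le_of_forall_abs_le (by positivity) hfy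

end Norming

/-- If `F ⊆ E*` is norming, the weak-`ℓᵖ` norm of a sequence can be computed using `F` instead of
the whole unit ball of `E*` (values taken in `ℝ≥0∞`, as the suprema may be infinite). -/
theorem weak_lp_norm_via_norming
    {E : Type*} [NormedAddCommGroup E] [NormedSpace ℝ E]
    (p : ℝ) (hp : 1 ≤ p) (x : ℕ → E) (F : Set (StrongDual ℝ E))
    (hF : ∀ y : E, (‖y‖₊ : ℝ≥0∞) = ⨆ f ∈ F, (‖f y‖₊ : ℝ≥0∞)) :
    (⨆ (g : StrongDual ℝ E) (_ : ‖g‖ ≤ 1),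
        (∑' n, (‖g (x n)‖₊ : ℝ≥0∞) ^ p) ^ (1 / p)) =
      ⨆ f ∈ F, (∑' n, (‖f (x n)‖₊ : ℝ≥0∞) ^ p) ^ (1 / p) := by
  have hF : IsNorming F := hF
  have hp0 : 0 < p := by linarith
  refine le_antisymm (iSup₂_le fun g hg => ?_)
    (iSup₂_le fun f hf => le_iSup₂_of_le f (hF.norm_le_one hf) le_rfl)
  set S := ⨆ f ∈ F, (∑' n, (‖f (x n)‖₊ : ℝ≥0∞) ^ p) ^ (1 / p)
  rcases eq_or_ne S ⊤ with hS_top | hS_fin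
  · exact hS_top ▸ le_top
  have hS : S = ENNReal.ofReal S.toReal := (ENNReal.ofReal_toReal hS_fin).symm
  have hF_sum : ∀ f ∈ F, ∀ s : Finset ℕ, ∑ n ∈ s, |f (x n)| ^ p ≤ S.toReal ^ p := fun f hf s => by
    rw [← ENNReal.sum_coe_nnnorm_rpow_le_ofReal_rpow_iff s hp0.le _ ENNReal.toReal_nonneg, ← hS]
    refine (ENNReal.sum_le_tsum s).trans ?_
    rw [← ENNReal.rpow_inv_le_iff hp0, ← one_div]
    exact le_iSup₂_of_le f hf le_rfl
  rw [one_div, ENNReal.rpow_inv_le_iff hp0, ENNReal.tsum_eq_iSup_sum, hS]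
  exact iSup_le fun s => (ENNReal.sum_coe_nnnorm_rpow_le_ofReal_rpow_iff s hp0.le _
    ENNReal.toReal_nonneg).2 (hF.sum_abs_rpow_le hp hg s x ENNReal.toReal_nonneg (hF_sum · · s))
end

section
/- Let E, F be Banach spaces and 1 ≤ p < q < ∞. If u : E → F is p-summing then u is q-summing and π_q(u) ≤ π_p(u). -/
/-!
Apply the `p`-summing inequality to the rescaled family `yₙ = ‖u xₙ‖^((q-p)/p) • xₙ`. Its left side
becomes `S = ∑ ‖u xₙ‖^q`, while Hölder with exponents `q/(q-p)` and `q/p` bounds each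
`∑ |x*(yₙ)|^p` by `S^(1-p/q) · (∑ |x*(xₙ)|^q)^(p/q)`. Dividing by `S^(1-p/q)` and raising to the power
`q/p` gives `S ≤ c^q · sup ∑ |x*(xₙ)|^q`: every admissible constant for `p` is admissible for `q`.
-/

open scoped BigOperators

/-- The set of admissible `p`-summing constants of `u`: nonnegative `c` such that
`∑ ‖u xₙ‖ᵖ ≤ cᵖ · sup_{‖x*‖≤1} ∑ |⟨xₙ, x*⟩|ᵖ` for all finite families. -/
def summingSet (p : ℝ) {E F : Type*} [NormedAddCommGroup E] [NormedSpace ℝ E]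
    [NormedAddCommGroup F] [NormedSpace ℝ F] (u : E →L[ℝ] F) : Set ℝ :=
  {c | 0 ≤ c ∧ ∀ (N : ℕ) (x : Fin N → E),
    ∑ n : Fin N, ‖u (x n)‖ ^ p ≤
      c ^ p * ⨆ g : {g : StrongDual ℝ E // ‖g‖ ≤ 1}, ∑ n : Fin N, |g.1 (x n)| ^ p}

/-- `u` is `p`-summing. -/
def IsPSumming (p : ℝ) {E F : Type*} [NormedAddCommGroup E] [NormedSpace ℝ E]
    [NormedAddCommGroup F] [NormedSpace ℝ F] (u : E →L[ℝ] F) : Prop :=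
  (summingSet p u).Nonempty

/-- The `p`-summing norm `π_p(u)` (the least admissible constant). -/
noncomputable def piNorm (p : ℝ) {E F : Type*} [NormedAddCommGroup E] [NormedSpace ℝ E]
    [NormedAddCommGroup F] [NormedSpace ℝ F] (u : E →L[ℝ] F) : ℝ :=
  sInf (summingSet p u)

open Finset

theorem Real.sum_rpow_sub_mul_rpow_le {ι : Type*} (s : Finset ι) {a b : ι → ℝ}
    (ha : ∀ i ∈ s, 0 ≤ a i) (hb : ∀ i ∈ s, 0 ≤ b i) {p q : ℝ} (hp : 0 < p) (hpq : p < q) :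
    ∑ i ∈ s, a i ^ (q - p) * b i ^ p ≤
      (∑ i ∈ s, a i ^ q) ^ ((q - p) / q) * (∑ i ∈ s, b i ^ q) ^ (p / q) := by
  have hq : 0 < q := hp.trans hpq
  have hconj : (q / (q - p)).HolderConjugate (q / p) := by
    rw [← inv_div, ← inv_div p]
    exact .inv_inv (div_pos (by linarith) hq) (div_pos hp hq) (by field_simp; ring)
  calc ∑ i ∈ s, a i ^ (q - p) * b i ^ p
      ≤ (∑ i ∈ s, (a i ^ (q - p)) ^ (q / (q - p))) ^ (1 / (q / (q - p))) *
          (∑ i ∈ s, (b i ^ p) ^ (q / p)) ^ (1 / (q / p)) :=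
        inner_le_Lp_mul_Lq_of_nonneg s hconj (fun i hi => rpow_nonneg (ha i hi) _)
          (fun i hi => rpow_nonneg (hb i hi) _)
    _ = _ := by
      rw [one_div_div, one_div_div]
      congr 2 <;> refine sum_congr rfl fun i hi => ?_
      · rw [← rpow_mul (ha i hi), mul_div_cancel₀ _ (by linarith)]
      · rw [← rpow_mul (hb i hi), mul_div_cancel₀ _ hp.ne']

theorem Real.le_rpow_mul_of_le_mul_rpow_mul_rpow {S T c p q : ℝ} (hS : 0 ≤ S) (hT : 0 ≤ T)
    (hc : 0 ≤ c) (hp : 0 < p) (hpq : p < q)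
    (h : S ≤ c ^ p * (S ^ ((q - p) / q) * T ^ (p / q))) : S ≤ c ^ q * T := by
  have hq : 0 < q := hp.trans hpq
  rcases hS.eq_or_lt with rfl | hS
  · positivity
  have hsplit : S = S ^ (p / q) * S ^ ((q - p) / q) := by
    rw [← rpow_add hS, ← add_div, add_sub_cancel, div_self hq.ne', rpow_one]
  have hcancel : S ^ (p / q) ≤ c ^ p * T ^ (p / q) := by
    refine le_of_mul_le_mul_right ?_ (rpow_pos_of_pos hS ((q - p) / q))
    rw [← hsplit]
    linarith
  rwa [← rpow_le_rpow_iff hS.le (by positivity) (div_pos hp hq), mul_rpow (by positivity) hT,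
    ← rpow_mul hc, mul_div_cancel₀ _ hq.ne']

theorem Real.abs_rpow_div_mul_rpow {a : ℝ} (ha : 0 ≤ a) {p : ℝ} (hp : p ≠ 0) (q b : ℝ) :
    |a ^ ((q - p) / p) * b| ^ p = a ^ (q - p) * |b| ^ p := by
  rw [abs_mul, abs_of_nonneg (rpow_nonneg ha _), mul_rpow (rpow_nonneg ha _) (abs_nonneg b),
    ← rpow_mul ha, div_mul_cancel₀ _ hp]

section WeakSum

variable {E : Type*} [NormedAddCommGroup E] [NormedSpace ℝ E]

instance : Nonempty {g : StrongDual ℝ E // ‖g‖ ≤ 1} := ⟨⟨0, by simp⟩⟩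

/-- The `p`-th power of the weak `ℓᵖ` norm of `x`. -/
noncomputable def weakSum (p : ℝ) {N : ℕ} (x : Fin N → E) : ℝ :=
  ⨆ g : {g : StrongDual ℝ E // ‖g‖ ≤ 1}, ∑ n, |g.1 (x n)| ^ p

theorem sum_rpow_abs_le_weakSum {r : ℝ} (hr : 0 ≤ r) {N : ℕ} (x : Fin N → E)
    (g : {g : StrongDual ℝ E // ‖g‖ ≤ 1}) : ∑ n, |g.1 (x n)| ^ r ≤ weakSum r x := by
  refine le_ciSup (f := fun g : {g : StrongDual ℝ E // ‖g‖ ≤ 1} => ∑ n, |g.1 (x n)| ^ r)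
    ⟨∑ n, ‖x n‖ ^ r, ?_⟩ g
  rintro _ ⟨g, rfl⟩
  dsimp only
  gcongr with n
  exact (g.1.le_opNorm _).trans (mul_le_of_le_one_left (norm_nonneg _) g.2)

theorem weakSum_nonneg {r : ℝ} (hr : 0 ≤ r) {N : ℕ} (x : Fin N → E) : 0 ≤ weakSum r x :=
  (sum_nonneg fun _ _ => by positivity).trans (sum_rpow_abs_le_weakSum hr x ⟨0, by simp⟩)

theorem weakSum_rpow_smul_le {p q : ℝ} (hp : 0 < p) (hpq : p < q) {N : ℕ} {a : Fin N → ℝ}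
    (ha : ∀ n, 0 ≤ a n) (x : Fin N → E) :
    weakSum p (fun n => a n ^ ((q - p) / p) • x n) ≤
      (∑ n, a n ^ q) ^ ((q - p) / q) * weakSum q x ^ (p / q) := by
  refine ciSup_le fun g => ?_
  calc ∑ n, |g.1 (a n ^ ((q - p) / p) • x n)| ^ p
      = ∑ n, a n ^ (q - p) * |g.1 (x n)| ^ p := by
        simp only [map_smul, smul_eq_mul, Real.abs_rpow_div_mul_rpow (ha _) hp.ne']
    _ ≤ (∑ n, a n ^ q) ^ ((q - p) / q) * (∑ n, |g.1 (x n)| ^ q) ^ (p / q) :=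
        Real.sum_rpow_sub_mul_rpow_le _ (fun n _ => ha n) (fun n _ => abs_nonneg _) hp hpq
    _ ≤ (∑ n, a n ^ q) ^ ((q - p) / q) * weakSum q x ^ (p / q) := by
        gcongr
        · exact Real.rpow_nonneg (sum_nonneg fun n _ => Real.rpow_nonneg (ha n) q) _
        · exact div_nonneg hp.le (hp.trans hpq).le
        · exact sum_rpow_abs_le_weakSum (hp.trans hpq).le x g

end WeakSum

theorem summingSet_subset {E F : Type*} [NormedAddCommGroup E] [NormedSpace ℝ E]
    [NormedAddCommGroup F] [NormedSpace ℝ F] {p q : ℝ} (hp : 0 < p) (hpq : p < q)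
    (u : E →L[ℝ] F) : summingSet p u ⊆ summingSet q u := by
  rintro c ⟨hc0, hc⟩
  refine ⟨hc0, fun N x => ?_⟩
  have hq : 0 < q := hp.trans hpq
  set a : Fin N → ℝ := fun n => ‖u (x n)‖
  have hupp : ∀ n, ‖u (a n ^ ((q - p) / p) • x n)‖ ^ p = a n ^ q := fun n => by
    rw [map_smul, norm_smul, Real.norm_eq_abs, ← abs_norm (u (x n)), ← abs_mul,
      Real.abs_rpow_div_mul_rpow (norm_nonneg _) hp.ne', abs_norm,
      ← Real.rpow_add' (norm_nonneg _) (by linarith), sub_add_cancel]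
  refine Real.le_rpow_mul_of_le_mul_rpow_mul_rpow (sum_nonneg fun n _ => by positivity)
    (weakSum_nonneg hq.le x) hc0 hp hpq ?_
  calc ∑ n, a n ^ q = ∑ n, ‖u (a n ^ ((q - p) / p) • x n)‖ ^ p := by simp only [hupp]
    _ ≤ c ^ p * weakSum p (fun n => a n ^ ((q - p) / p) • x n) := hc N _
    _ ≤ c ^ p * ((∑ n, a n ^ q) ^ ((q - p) / q) * weakSum q x ^ (p / q)) := by
      gcongr
      exact weakSum_rpow_smul_le hp hpq (fun n => norm_nonneg _) x

/-- If `1 ≤ p < q` and `u` is `p`-summing, then `u` is `q`-summing and `π_q(u) ≤ π_p(u)`. -/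
theorem pSumming_mono
    {E F : Type*} [NormedAddCommGroup E] [NormedSpace ℝ E]
    [NormedAddCommGroup F] [NormedSpace ℝ F]
    (p q : ℝ) (hp : 1 ≤ p) (hpq : p < q) (u : E →L[ℝ] F) (hu : IsPSumming p u) :
    IsPSumming q u ∧ piNorm q u ≤ piNorm p u := by
  have hsub := summingSet_subset (zero_lt_one.trans_le hp) hpq u
  exact ⟨hu.mono hsub, csInf_le_csInf ⟨0, fun _ hc => hc.1⟩ hu hsub⟩
end

section
/- Let E, F be Banach spaces and u : E → F a bounded linear operator. Then u is absolutely summing (i.e., ∑ₙ ‖u xₙ‖ < ∞ whenever ∑ₙ xₙ is unconditionally convergent) if and only if u is 1-summing, and in that case π₁(u) = π_abs(u). -/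
open scoped BigOperators

/-- A series `∑ xₙ` is commutatively (unconditionally) convergent: every rearrangement
converges. -/
def UncondConvergent {E : Type*} [NormedAddCommGroup E] (x : ℕ → E) : Prop :=
  ∀ σ : Equiv.Perm ℕ, ∃ S : E,
    Filter.Tendsto (fun N => ∑ n ∈ Finset.range N, x (σ n)) Filter.atTop (nhds S)

/-- `u` is absolutely summing: `∑ ‖u xₙ‖ < ∞` for every commutatively convergent `∑ xₙ`. -/
def IsAbsSumming {E F : Type*} [NormedAddCommGroup E] [NormedSpace ℝ E]
    [NormedAddCommGroup F] [NormedSpace ℝ F] (u : E →L[ℝ] F) : Prop :=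
  ∀ x : ℕ → E, UncondConvergent x → Summable fun n => ‖u (x n)‖

/-- The absolutely summing constant `π_abs(u)`: supremum of `∑_{n<N} ‖u xₙ‖` over all finite
families with `sup_{εₙ=±1} ‖∑ εₙ xₙ‖ ≤ 1`. -/
noncomputable def piAbs {E F : Type*} [NormedAddCommGroup E] [NormedSpace ℝ E]
    [NormedAddCommGroup F] [NormedSpace ℝ F] (u : E →L[ℝ] F) : ℝ :=
  sSup {r | ∃ (N : ℕ) (x : Fin N → E),
    (∀ ε : Fin N → Bool, ‖∑ n : Fin N, (if ε n then (1 : ℝ) else -1) • x n‖ ≤ 1) ∧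
    r = ∑ n : Fin N, ‖u (x n)‖}

/-!
Both directions go through the weak ℓ¹ norm `sup_{‖g‖ ≤ 1} ∑ |g xᵢ|` of a finite family, which is
the largest norm of its signed sums `∑ ±xᵢ`. Hence `π_abs(u)` is the best constant `c` in
`∑ ‖u xᵢ‖ ≤ c · (weak ℓ¹ norm of x)`, which is `π₁(u)` as soon as it is finite.

In a Banach space a series converges unconditionally iff its finite subsums are uniformly Cauchy: a
rearrangement gathering far-out subsums of large norm into consecutive blocks would diverge. So the
subsums of an unconditionally convergent series are bounded and a 1-summing `u` is absolutely
summing. Conversely, if `π_abs(u) = ∞`, families of weak ℓ¹ norm `2⁻ᵏ` with `∑ ‖u xᵢ‖ ≥ 1`, laid end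
to end, form an unconditionally convergent series on which `∑ ‖u xₙ‖` diverges.
-/

open Finset Function

theorem exists_perm_forall_map_eq {ι α : Type*} [DecidableEq α] (J S : ι → Finset α)
    (hcard : ∀ k, #(J k) = #(S k))
    (hdisj : Pairwise fun j k => Disjoint (J j ∪ S j) (J k ∪ S k)) :
    ∃ σ : Equiv.Perm α, ∀ k, (J k).map σ.toEmbedding = S k := by
  classical
  let U : ι → Set α := fun k => ↑(J k ∪ S k)
  have hU : Pairwise (Disjoint on U) := fun j k hjk => Finset.disjoint_coe.2 (hdisj hjk)
  have block : ∀ k, ∃ τ : Equiv.Perm (U k),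
      ∀ a (ha : a ∈ J k), (τ ⟨a, by simp [U, ha]⟩ : α) ∈ S k := by
    intro k
    let e := (J k).equivOfCardEq (hcard k)
    obtain ⟨τ, hτ⟩ := Equiv.Perm.exists_extending_pair
      (fun a : J k => (⟨a, by simp [U]⟩ : U k))
      (fun a => ⟨e a, by simp [U]⟩) (fun a b h => by simpa using h)
      (fun a b h => e.injective (by simpa using h))
    exact ⟨τ, fun a ha => by rw [hτ ⟨a, ha⟩]; exact (e _).2⟩
  choose τ hτ using block
  let e := Set.unionEqSigmaOfDisjoint hU
  refine ⟨Equiv.Perm.ofSubtype (e.trans ((Equiv.sigmaCongrRight τ).trans e.symm)), fun k => ?_⟩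
  refine eq_of_subset_of_card_le (fun b hb => ?_) (by simp [hcard])
  obtain ⟨a, ha, rfl⟩ := mem_map.1 hb
  have haU : a ∈ U k := by simp [U, ha]
  have hae : e ⟨a, Set.mem_iUnion.2 ⟨k, haU⟩⟩ = ⟨k, ⟨a, haU⟩⟩ :=
    e.eq_symm_apply.1
      (Subtype.ext (Set.coe_unionEqSigmaOfDisjoint_symm_apply hU ⟨k, ⟨a, haU⟩⟩).symm)
  simp only [Equiv.toEmbedding_apply,
    Equiv.Perm.ofSubtype_apply_of_mem _ (Set.mem_iUnion.2 ⟨k, haU⟩), Equiv.trans_apply, hae,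
    Equiv.sigmaCongrRight_apply]
  exact hτ k a ha

theorem Summable.uncondConvergent {E : Type*} [NormedAddCommGroup E] {x : ℕ → E}
    (hx : Summable x) : UncondConvergent x :=
  fun σ => ⟨_, ((Equiv.summable_iff σ).2 hx).hasSum.tendsto_sum_nat⟩

theorem UncondConvergent.summable {E : Type*} [NormedAddCommGroup E] [CompleteSpace E]
    {x : ℕ → E} (hx : UncondConvergent x) : Summable x := by
  rw [summable_iff_vanishing_norm]
  by_contra! h
  obtain ⟨ε, hε, h⟩ := h
  choose S hS_disj hS_large using h
  -- The `k`-th block `[m k, m (k + 1))` holds a far-out set `T k` with a large sum, and room for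
  -- an interval `J k` of the same size onto which a rearrangement can gather it.
  let next : ℕ → ℕ := fun a => a + #(S (range a)) + (S (range a)).sup id + 1
  let m : ℕ → ℕ := fun k => next^[k] 0
  let T : ℕ → Finset ℕ := fun k => S (range (m k))
  let J : ℕ → Finset ℕ := fun k => Ico (m k) (m k + #(T k))
  have hm_succ : ∀ k, m (k + 1) = next (m k) := fun k => iterate_succ_apply' next k 0
  have hm_mono : StrictMono m :=
    strictMono_nat_of_lt_succ fun k => by rw [hm_succ]; simp only [next]; omega
  have hlow : ∀ k, Disjoint (J k ∪ T k) (range (m k)) := fun k =>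
    disjoint_union_left.2 ⟨disjoint_left.2 fun n hn hn' => by simp_all [J]; omega, hS_disj _⟩
  have hhigh : ∀ k, J k ∪ T k ⊆ range (m (k + 1)) := by
    intro k n hn
    simp only [hm_succ, next, mem_range]
    rcases mem_union.1 hn with hn | hn
    · simp only [J, T, mem_Ico] at hn; omega
    · have := le_sup (f := id) hn; simp only [T, id] at this hn ⊢; omega
  have hdisj : Pairwise fun j k => Disjoint (J j ∪ T j) (J k ∪ T k) :=
    (pairwise_disjoint_on _).2 fun j k hjk =>
      (hlow k).symm.mono_left ((hhigh j).trans (range_subset_range.2 (hm_mono.monotone hjk)))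
  obtain ⟨σ, hσ⟩ :=
    exists_perm_forall_map_eq J T (fun k => (Nat.card_Ico _ _).trans (by omega)) hdisj
  obtain ⟨L, hL⟩ := hx σ
  obtain ⟨N, hN⟩ := Metric.cauchySeq_iff.1 hL.cauchySeq ε hε
  have hN_le : N ≤ m N := hm_mono.le_apply
  have := hN (m N + #(T N)) (by omega) (m N) hN_le
  rw [dist_eq_norm, ← sum_Ico_eq_sub _ (by omega)] at this
  have hsum : ∑ n ∈ J N, x (σ n) = ∑ n ∈ T N, x n := by
    rw [← hσ N, sum_map]; rfl
  exact (hS_large _).not_gt (hsum ▸ this)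

theorem Summable.exists_forall_norm_sum_le {ι E : Type*} [SeminormedAddCommGroup E] {x : ι → E}
    (hx : Summable x) : ∃ B, ∀ t : Finset ι, ‖∑ i ∈ t, x i‖ ≤ B := by
  classical
  obtain ⟨s, hs⟩ := hx.vanishing (Metric.ball_mem_nhds 0 one_pos)
  refine ⟨∑ i ∈ s, ‖x i‖ + 1, fun t => ?_⟩
  rw [← sum_inter_add_sum_sdiff t s]
  refine (norm_add_le _ _).trans (add_le_add ?_ (mem_ball_zero_iff.1 (hs _ sdiff_disjoint)).le)
  exact (norm_sum_le _ _).trans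
    (sum_le_sum_of_subset_of_nonneg inter_subset_right fun _ _ _ => norm_nonneg _)

section WeakNorm

variable {E : Type*} [NormedAddCommGroup E] [NormedSpace ℝ E] {ι : Type*} [Fintype ι]

instance inst_s9 : Nonempty {g : StrongDual ℝ E // ‖g‖ ≤ 1} := ⟨⟨0, by simp⟩⟩

noncomputable def weakL1Norm (x : ι → E) : ℝ :=
  ⨆ g : {g : StrongDual ℝ E // ‖g‖ ≤ 1}, ∑ i, |g.1 (x i)|

theorem sum_abs_apply_le_weakL1Norm (x : ι → E) {g : StrongDual ℝ E} (hg : ‖g‖ ≤ 1) :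
    ∑ i, |g (x i)| ≤ weakL1Norm x := by
  refine le_ciSup (f := fun g : {g : StrongDual ℝ E // ‖g‖ ≤ 1} => ∑ i, |g.1 (x i)|)
    ⟨∑ i, ‖x i‖, ?_⟩ ⟨g, hg⟩
  rintro _ ⟨g, rfl⟩
  exact sum_le_sum fun i _ => (g.1.le_of_opNorm_le g.2 (x i)).trans_eq (one_mul _)

theorem norm_sum_smul_le_weakL1Norm (x : ι → E) {c : ι → ℝ} (hc : ∀ i, |c i| ≤ 1) :
    ‖∑ i, c i • x i‖ ≤ weakL1Norm x := by
  obtain ⟨g, hg, hgv⟩ := exists_dual_vector'' ℝ (∑ i, c i • x i)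
  calc ‖∑ i, c i • x i‖ = g (∑ i, c i • x i) := hgv.symm
    _ = ∑ i, c i * g (x i) := by simp [map_sum]
    _ ≤ ∑ i, |g (x i)| := sum_le_sum fun i _ =>
      (le_abs_self _).trans ((abs_mul _ _).trans_le (mul_le_of_le_one_left (abs_nonneg _) (hc i)))
    _ ≤ weakL1Norm x := sum_abs_apply_le_weakL1Norm x hg

theorem norm_sum_le_weakL1Norm (x : ι → E) (s : Finset ι) :
    ‖∑ i ∈ s, x i‖ ≤ weakL1Norm x := by
  classical
  have hc : ∀ i, |(if i ∈ s then 1 else 0 : ℝ)| ≤ 1 := fun i => by split_ifs <;> simp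
  simpa [ite_smul, sum_ite_mem] using norm_sum_smul_le_weakL1Norm x hc

theorem weakL1Norm_nonneg (x : ι → E) : 0 ≤ weakL1Norm x := by
  simpa using norm_sum_le_weakL1Norm x ∅

theorem weakL1Norm_le_iff (x : ι → E) {C : ℝ} : weakL1Norm x ≤ C ↔
    ∀ ε : ι → Bool, ‖∑ i, (if ε i then (1 : ℝ) else -1) • x i‖ ≤ C := by
  refine ⟨fun h ε => (norm_sum_smul_le_weakL1Norm x fun i => ?_).trans h, fun h => ?_⟩
  · split_ifs <;> simp
  refine ciSup_le fun g => ?_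
  have hsign : ∑ i, |g.1 (x i)| =
      g.1 (∑ i, (if decide (0 ≤ g.1 (x i)) then (1 : ℝ) else -1) • x i) := by
    rw [map_sum]
    refine sum_congr rfl fun i _ => ?_
    by_cases hi : 0 ≤ g.1 (x i)
    · simp [hi, abs_of_nonneg hi]
    · simp [hi, abs_of_neg (not_le.1 hi)]
  rw [hsign]
  refine (le_abs_self _).trans ((g.1.le_of_opNorm_le g.2 _).trans ?_)
  simpa using h fun i => decide (0 ≤ g.1 (x i))

theorem weakL1Norm_smul (t : ℝ) (x : ι → E) : weakL1Norm (t • x) = |t| * weakL1Norm x := by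
  simp only [weakL1Norm, Real.mul_iSup_of_nonneg (abs_nonneg t), mul_sum, Pi.smul_apply, map_smul,
    smul_eq_mul, abs_mul]

theorem weakL1Norm_le_two_mul {B : ℝ} (x : ι → E) (h : ∀ s : Finset ι, ‖∑ i ∈ s, x i‖ ≤ B) :
    weakL1Norm x ≤ 2 * B := by
  classical
  refine (weakL1Norm_le_iff x).2 fun ε => ?_
  have hsplit : ∑ i, (if ε i then (1 : ℝ) else -1) • x i =
      ∑ i ∈ univ.filter (ε · = true), x i - ∑ i ∈ univ.filter (ε · ≠ true), x i := by
    rw [sum_filter, sum_filter, ← sum_sub_distrib]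
    refine sum_congr rfl fun i _ => ?_
    cases ε i <;> simp
  rw [hsplit, two_mul]
  exact (norm_sub_le _ _).trans (add_le_add (h _) (h _))

end WeakNorm

section PiAbs

variable {E F : Type*} [NormedAddCommGroup E] [NormedSpace ℝ E] [NormedAddCommGroup F]
  [NormedSpace ℝ F] (u : E →L[ℝ] F)

def piAbsSet : Set ℝ :=
  {r | ∃ (N : ℕ) (x : Fin N → E), weakL1Norm x ≤ 1 ∧ r = ∑ n, ‖u (x n)‖}

theorem piAbs_eq_sSup : piAbs u = sSup (piAbsSet u) := by
  simp only [piAbs, piAbsSet, weakL1Norm_le_iff]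

theorem zero_mem_piAbsSet : (0 : ℝ) ∈ piAbsSet u :=
  ⟨0, Fin.elim0, by simp [weakL1Norm_le_iff], by simp⟩

theorem mem_summingSet_one_iff {c : ℝ} : c ∈ summingSet 1 u ↔
    0 ≤ c ∧ ∀ (N : ℕ) (x : Fin N → E), ∑ n, ‖u (x n)‖ ≤ c * weakL1Norm x := by
  simp only [summingSet, Set.mem_ofPred_eq, Real.rpow_one, weakL1Norm]

variable {u}

theorem le_of_mem_summingSet_one {c r : ℝ} (hc : c ∈ summingSet 1 u) (hr : r ∈ piAbsSet u) :
    r ≤ c := by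
  obtain ⟨hc0, hc⟩ := (mem_summingSet_one_iff u).1 hc
  obtain ⟨N, x, hx, rfl⟩ := hr
  exact (hc N x).trans (mul_le_of_le_one_right hc0 hx)

theorem sum_norm_le_piAbs_mul (hb : BddAbove (piAbsSet u)) {N : ℕ} (x : Fin N → E) :
    ∑ n, ‖u (x n)‖ ≤ piAbs u * weakL1Norm x := by
  rw [piAbs_eq_sSup]
  rcases (weakL1Norm_nonneg x).eq_or_lt with hM | hM
  · have hx : ∀ n, x n = 0 := fun n => norm_le_zero_iff.1 <| by
      simpa [← hM] using norm_sum_le_weakL1Norm x {n}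
    simp [hx, ← hM]
  · have hmem : (weakL1Norm x)⁻¹ * ∑ n, ‖u (x n)‖ ∈ piAbsSet u := by
      refine ⟨N, (weakL1Norm x)⁻¹ • x, ?_, ?_⟩
      · rw [weakL1Norm_smul, abs_of_pos (inv_pos.2 hM), inv_mul_cancel₀ hM.ne']
      · simp [mul_sum, norm_smul, abs_of_pos hM]
    rw [mul_comm, ← inv_mul_le_iff₀ hM]
    exact le_csSup hb hmem

theorem piAbs_mem_summingSet_one (hb : BddAbove (piAbsSet u)) : piAbs u ∈ summingSet 1 u :=
  (mem_summingSet_one_iff u).2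
    ⟨(le_csSup hb (zero_mem_piAbsSet u)).trans_eq (piAbs_eq_sSup u).symm,
      fun _ x => sum_norm_le_piAbs_mul hb x⟩

theorem isPSumming_one_iff_bddAbove : IsPSumming 1 u ↔ BddAbove (piAbsSet u) :=
  ⟨fun ⟨c, hc⟩ => ⟨c, fun _ hr => le_of_mem_summingSet_one hc hr⟩,
    fun hb => ⟨_, piAbs_mem_summingSet_one hb⟩⟩

theorem piNorm_one_eq_piAbs (hb : BddAbove (piAbsSet u)) : piNorm 1 u = piAbs u := by
  refine le_antisymm (csInf_le ⟨0, fun c hc => hc.1⟩ (piAbs_mem_summingSet_one hb)) ?_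
  refine le_csInf ⟨_, piAbs_mem_summingSet_one hb⟩ fun c hc => ?_
  rw [piAbs_eq_sSup]
  exact csSup_le ⟨0, zero_mem_piAbsSet u⟩ fun r hr => le_of_mem_summingSet_one hc hr

end PiAbs

section AbsSumming

variable {E F : Type*} [NormedAddCommGroup E] [NormedSpace ℝ E] [NormedAddCommGroup F]
  [NormedSpace ℝ F] {u : E →L[ℝ] F}

theorem summable_sigma_of_weakL1Norm_le [CompleteSpace E] {κ : Type*} {β : κ → Type*}
    [∀ k, Fintype (β k)] (y : ∀ k, β k → E) {w : κ → ℝ} (hw : Summable w)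
    (hy : ∀ k, weakL1Norm (y k) ≤ w k) : Summable fun p : Σ k, β k => y p.1 p.2 := by
  classical
  refine summable_iff_vanishing_norm.2 fun ε hε => ?_
  obtain ⟨s, hs⟩ := summable_iff_vanishing_norm.1 hw ε hε
  refine ⟨s.sigma fun _ => univ, fun t ht => ?_⟩
  have hT : Disjoint (t.image Sigma.fst) s := disjoint_left.2 fun k hk hks => by
    obtain ⟨p, hp, rfl⟩ := mem_image.1 hk
    exact disjoint_left.1 ht hp (mem_sigma.2 ⟨hks, mem_univ _⟩)
  rw [← sigma_image_fst_preimage_mk t, sum_sigma]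
  calc ‖∑ k ∈ t.image Sigma.fst, ∑ i ∈ t.preimage (Sigma.mk k) _, y k i‖
      ≤ ∑ k ∈ t.image Sigma.fst, w k :=
        (norm_sum_le _ _).trans (sum_le_sum fun k _ => (norm_sum_le_weakL1Norm _ _).trans (hy k))
    _ ≤ ‖∑ k ∈ t.image Sigma.fst, w k‖ := le_abs_self _
    _ < ε := hs _ hT

theorem IsAbsSumming.summable_norm_comp (hu : IsAbsSumming u) {ι : Type*} [Countable ι]
    {z : ι → E} (hz : Summable z) : Summable fun i => ‖u (z i)‖ := by
  cases finite_or_infinite ι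
  · exact .of_finite
  · obtain ⟨_⟩ := nonempty_denumerable ι
    let e : ℕ ≃ ι := (Denumerable.eqv ι).symm
    exact e.summable_iff.1 (hu (z ∘ e) (e.summable_iff.2 hz).uncondConvergent)

theorem IsPSumming.isAbsSumming [CompleteSpace E] (hu : IsPSumming 1 u) : IsAbsSumming u := by
  obtain ⟨c, hc⟩ := hu
  obtain ⟨hc0, hc⟩ := (mem_summingSet_one_iff u).1 hc
  intro x hx
  obtain ⟨B, hB⟩ := hx.summable.exists_forall_norm_sum_le
  refine summable_of_sum_range_le (c := c * (2 * B)) (fun n => norm_nonneg _) fun N => ?_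
  have hweak : weakL1Norm (fun n : Fin N => x n) ≤ 2 * B :=
    weakL1Norm_le_two_mul _ fun s => by simpa [sum_map] using hB (s.map Fin.valEmbedding)
  calc ∑ n ∈ range N, ‖u (x n)‖ = ∑ n : Fin N, ‖u (x n)‖ :=
        (Fin.sum_univ_eq_sum_range _ N).symm
    _ ≤ c * (2 * B) := (hc N _).trans (mul_le_mul_of_nonneg_left hweak hc0)

theorem IsAbsSumming.bddAbove_piAbsSet [CompleteSpace E] (hu : IsAbsSumming u) :
    BddAbove (piAbsSet u) := by
  by_contra hb
  have hump : ∀ k : ℕ, ∃ (N : ℕ) (y : Fin N → E),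
      weakL1Norm y ≤ (1 / 2 : ℝ) ^ k ∧ 1 ≤ ∑ n, ‖u (y n)‖ := by
    intro k
    obtain ⟨_, ⟨N, x, hx, rfl⟩, hlarge⟩ := not_bddAbove_iff.1 hb (2 ^ k)
    refine ⟨N, (1 / 2 : ℝ) ^ k • x, ?_, ?_⟩
    · rw [weakL1Norm_smul, abs_of_nonneg (by positivity)]
      exact mul_le_of_le_one_right (by positivity) hx
    · simp only [Pi.smul_apply, map_smul, norm_smul, ← mul_sum, Real.norm_of_nonneg
        (by positivity : (0 : ℝ) ≤ (1 / 2) ^ k)]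
      calc (1 : ℝ) = (1 / 2) ^ k * 2 ^ k := by rw [← mul_pow]; norm_num
        _ ≤ _ := mul_le_mul_of_nonneg_left hlarge.le (by positivity)
  choose N y hy_small hy_large using hump
  have hsum :=
    hu.summable_norm_comp (summable_sigma_of_weakL1Norm_le y summable_geometric_two hy_small)
  have hblocks := ((summable_sigma_of_nonneg fun _ => norm_nonneg _).1 hsum).2
  have hone : Summable fun _ : ℕ => (1 : ℝ) :=
    hblocks.of_nonneg_of_le (fun _ => zero_le_one) fun k => by simpa using hy_large k
  exact one_ne_zero ((summable_const_iff 1).1 hone)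

end AbsSumming

theorem absSumming_iff_one_summing_general
    {E F : Type*} [NormedAddCommGroup E] [NormedSpace ℝ E] [CompleteSpace E]
    [NormedAddCommGroup F] [NormedSpace ℝ F]
    (u : E →L[ℝ] F) :
    (IsAbsSumming u ↔ IsPSumming 1 u) ∧
      (IsAbsSumming u → piNorm 1 u = piAbs u) := by
  have hbdd : IsAbsSumming u ↔ BddAbove (piAbsSet u) :=
    ⟨IsAbsSumming.bddAbove_piAbsSet, fun hb => (isPSumming_one_iff_bddAbove.2 hb).isAbsSumming⟩
  exact ⟨hbdd.trans isPSumming_one_iff_bddAbove.symm, fun hu => piNorm_one_eq_piAbs (hbdd.1 hu)⟩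

/-- `u` is absolutely summing iff `u` is `1`-summing, and then `π₁(u) = π_abs(u)`. -/
theorem absSumming_iff_one_summing
    {E F : Type*} [NormedAddCommGroup E] [NormedSpace ℝ E] [CompleteSpace E]
    [NormedAddCommGroup F] [NormedSpace ℝ F] [CompleteSpace F]
    (u : E →L[ℝ] F) :
    (IsAbsSumming u ↔ IsPSumming 1 u) ∧
      (IsAbsSumming u → piNorm 1 u = piAbs u) :=
  absSumming_iff_one_summing_general u
end
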